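/- arXiv:1302.2437 — 8 statements merged into one kernel-verified Lean document; each statement's English description precedes it below -/
import Mathlib

section
/- Let K be a field, l > 1 an integer, and let d, n be integers with 1 ≤ d ≤ l−1, 2 ≤ n ≤ l and d + n ≥ l + 1. Let q₁, …, qₙ be pairwise distinct elements of K satisfying q_j^l = 1 for every j. Then S_{d,n}(q₁, …, qₙ) = 0. -/
/-!
The generating function of the `S_{d,n}(x)` is `H = ∏ᵢ 1 / (1 - xᵢ t)`. If the `xᵢ` are distinct
`l`-th roots of unity, the coprime factors `1 - xᵢ t` all divide `1 - t^l`, so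
`1 - t^l = P Q` with `P = ∏ᵢ (1 - xᵢ t)` and `deg Q = l - n`. Then `(1 - t^l) H = Q`, and comparing
coefficients of `t^d` for `l - n < d < l` gives `S_{d,n}(x) = 0`.
-/

/-- The complete homogeneous symmetric polynomial `S_{d,n}(x₁,…,xₙ)`:
the sum over all weakly increasing `d`-tuples of indices, equivalently the sum over all
exponent vectors `(k₁,…,kₙ)` with `k₁ + ⋯ + kₙ = d` of `x₁^{k₁}⋯xₙ^{kₙ}` (with `S_{0,n} = 1`). -/
noncomputable def completeHomogeneous {K : Type*} [CommRing K] (d n : ℕ) (x : Fin n → K) : K :=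
  ∑ f ∈ Finset.Nat.antidiagonalTuple n d, ∏ i, x i ^ f i

open Finset Polynomial

theorem completeHomogeneous_eq_coeff_prod_mk {R : Type*} [CommRing R] (d n : ℕ) (x : Fin n → R) :
    completeHomogeneous d n x = PowerSeries.coeff d (∏ i, PowerSeries.mk (x i ^ ·)) := by
  classical
  rw [PowerSeries.coeff_prod, completeHomogeneous]
  symm
  refine sum_equiv Finsupp.equivFunOnFinite (fun f => ?_) (fun f _ => ?_)
  · simp [Nat.mem_antidiagonalTuple]
  · simp

theorem PowerSeries.mk_pow_mul_one_sub_C_mul_X {R : Type*} [CommRing R] (a : R) :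
    PowerSeries.mk (a ^ ·) * (1 - PowerSeries.C a * PowerSeries.X) = 1 := by
  have h := congrArg (PowerSeries.rescale a) (PowerSeries.mk_one_mul_one_sub_eq_one (S := R))
  simpa [PowerSeries.rescale_mk, PowerSeries.rescale_X] using h

theorem PowerSeries.coeff_eq_zero_of_one_sub_X_pow_mul_eq {R : Type*} [CommRing R]
    {l d : ℕ} {H : PowerSeries R} {Q : R[X]}
    (hH : (1 - PowerSeries.X ^ l : PowerSeries R) * H = (Q : PowerSeries R))
    (hQd : Q.natDegree < d) (hdl : d < l) : PowerSeries.coeff d H = 0 := by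
  have := congrArg (PowerSeries.coeff d) hH
  rwa [sub_mul, one_mul, map_sub, PowerSeries.coeff_X_pow_mul', if_neg (by omega), sub_zero,
    Polynomial.coeff_coe, coeff_eq_zero_of_natDegree_lt hQd] at this

theorem isCoprime_one_sub_C_mul_X {K : Type*} [Field K] {a b : K} (hab : a ≠ b) :
    IsCoprime (1 - C a * X) (1 - C b * X) := by
  have hba : b - a ≠ 0 := sub_ne_zero.mpr hab.symm
  have h : C b * C (b - a)⁻¹ - C a * C (b - a)⁻¹ = (1 : K[X]) := by
    rw [← sub_mul, ← map_sub, ← map_mul, mul_inv_cancel₀ hba, map_one]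
  exact ⟨C b * C (b - a)⁻¹, -(C a * C (b - a)⁻¹), by linear_combination h⟩

theorem one_sub_C_mul_X_dvd_one_sub_X_pow {R : Type*} [CommRing R] {a : R} {l : ℕ}
    (ha : a ^ l = 1) : 1 - C a * X ∣ 1 - X ^ l := by
  have h := sub_dvd_pow_sub_pow 1 (C a * X) l
  rwa [one_pow, mul_pow, ← map_pow, ha, map_one, one_mul] at h

theorem natDegree_one_sub_C_mul_X {R : Type*} [CommRing R] [Nontrivial R] {a : R} (ha : a ≠ 0) :
    (1 - C a * X).natDegree = 1 := by
  rw [natDegree_sub_eq_right_of_natDegree_lt] <;> simp [ha]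

theorem natDegree_one_sub_X_pow {R : Type*} [CommRing R] [Nontrivial R] {l : ℕ} (hl : l ≠ 0) :
    (1 - X ^ l : R[X]).natDegree = l := by
  rw [natDegree_sub_eq_right_of_natDegree_lt] <;> simp [Nat.pos_of_ne_zero hl]

theorem prod_one_sub_C_mul_X_dvd_one_sub_X_pow {K ι : Type*} [Field K] [Fintype ι] {x : ι → K}
    (hx : Function.Injective x) {l : ℕ} (hroot : ∀ i, x i ^ l = 1) :
    ∏ i, (1 - C (x i) * X) ∣ 1 - X ^ l :=
  prod_dvd_of_coprime (fun _ _ _ _ hij => isCoprime_one_sub_C_mul_X (hx.ne hij))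
    (fun i _ => one_sub_C_mul_X_dvd_one_sub_X_pow (hroot i))

theorem coe_prod_one_sub_C_mul_X_mul_prod_mk {K ι : Type*} [CommRing K] [Fintype ι] (x : ι → K) :
    ((∏ i, (1 - C (x i) * X) : K[X]) : PowerSeries K) * ∏ i, PowerSeries.mk (x i ^ ·) = 1 := by
  rw [← coeToPowerSeries.ringHom_apply, map_prod, ← prod_mul_distrib]
  refine prod_eq_one fun i _ => ?_
  rw [coeToPowerSeries.ringHom_apply, mul_comm]
  simpa using PowerSeries.mk_pow_mul_one_sub_C_mul_X (x i)

theorem completeHomogeneous_eq_zero_of_pow_eq_one {K : Type*} [Field K] {l d n : ℕ}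
    {x : Fin n → K} (hx : Function.Injective x) (hroot : ∀ i, x i ^ l = 1)
    (hdl : d < l) (hdn : l < d + n) : completeHomogeneous d n x = 0 := by
  have hl : l ≠ 0 := by omega
  have hx0 : ∀ i, x i ≠ 0 := fun i h => by simpa [h, zero_pow hl] using hroot i
  obtain ⟨Q, hPQ⟩ := prod_one_sub_C_mul_X_dvd_one_sub_X_pow hx hroot
  set P := ∏ i, (1 - C (x i) * X)
  have hPn : P.natDegree = n := by
    rw [natDegree_prod _ _ fun i _ h => by simpa [h] using natDegree_one_sub_C_mul_X (hx0 i)]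
    simp [natDegree_one_sub_C_mul_X (hx0 _)]
  have hPQ0 : P * Q ≠ 0 :=
    hPQ ▸ ne_zero_of_natDegree_gt (n := 0) (by rw [natDegree_one_sub_X_pow hl]; omega)
  obtain ⟨hP0, hQ0⟩ := mul_ne_zero_iff.mp hPQ0
  have hQl : Q.natDegree + n = l := by
    rw [← natDegree_one_sub_X_pow (R := K) hl, hPQ, natDegree_mul hP0 hQ0, hPn, add_comm]
  rw [completeHomogeneous_eq_coeff_prod_mk]
  refine PowerSeries.coeff_eq_zero_of_one_sub_X_pow_mul_eq (Q := Q) ?_ (by omega) hdl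
  calc (1 - PowerSeries.X ^ l) * ∏ i, PowerSeries.mk (x i ^ ·)
      = ((P * Q : K[X]) : PowerSeries K) * ∏ i, PowerSeries.mk (x i ^ ·) := by
        rw [← hPQ]; simp
    _ = Q * ((P : PowerSeries K) * ∏ i, PowerSeries.mk (x i ^ ·)) := by push_cast; ring
    _ = Q := by rw [coe_prod_one_sub_C_mul_X_mul_prod_mk, mul_one]

theorem stmt0_general (K : Type*) [Field K] (l d n : ℕ) (hl : 1 < l)
    (hdl : d ≤ l - 1)
    (hdn : l + 1 ≤ d + n)
    (x : Fin n → K) (hdist : Function.Injective x)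
    (hroot : ∀ j, x j ^ l = 1) :
    completeHomogeneous d n x = 0 :=
  completeHomogeneous_eq_zero_of_pow_eq_one hdist hroot (by omega) (by omega)

theorem stmt0 (K : Type*) [Field K] (l d n : ℕ) (hl : 1 < l)
    (hd1 : 1 ≤ d) (hdl : d ≤ l - 1) (hn2 : 2 ≤ n) (hnl : n ≤ l)
    (hdn : l + 1 ≤ d + n)
    (x : Fin n → K) (hdist : Function.Injective x)
    (hroot : ∀ j, x j ^ l = 1) :
    completeHomogeneous d n x = 0 :=
  stmt0_general K l d n hl hdl hdn x hdist hroot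
end

section
/- Let K be a field, l > 1 an integer, n ≥ 1 an integer, and let q₁, …, qₙ be pairwise distinct elements of K satisfying q_j^l = 1 and q_j ≠ 1 for every j. Then Σ_{d=0}^{l−1} S_{d,n}(q₁, …, qₙ) = 0. -/
open Finset

theorem Finset.Nat.sum_antidiagonalTuple_succ {M : Type*} [AddCommMonoid M] (k n : ℕ)
    (g : (Fin (k + 1) → ℕ) → M) :
    ∑ f ∈ Nat.antidiagonalTuple (k + 1) n, g f =
      ∑ p ∈ antidiagonal n, ∑ f ∈ Nat.antidiagonalTuple k p.2, g (Fin.cons p.1 f) := by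
  change (((List.Nat.antidiagonalTuple (k + 1) n : Multiset _).map g).sum) =
    ((List.Nat.antidiagonal n : Multiset (ℕ × ℕ)).map fun p : ℕ × ℕ =>
      ((List.Nat.antidiagonalTuple k p.2 : Multiset _).map fun f => g (Fin.cons p.1 f)).sum).sum
  simp only [Multiset.map_coe, Multiset.sum_coe, List.Nat.antidiagonalTuple, List.map_flatten,
    List.flatMap_def, List.sum_flatten, List.map_map, Function.comp_def]

section CommRing

variable {K : Type*} [CommRing K]

@[simp]
theorem completeHomogeneous_zero (n : ℕ) (x : Fin n → K) : completeHomogeneous 0 n x = 1 := by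
  simp [completeHomogeneous, Nat.antidiagonalTuple_zero_right]

theorem completeHomogeneous_fin_one (d : ℕ) (x : Fin 1 → K) :
    completeHomogeneous d 1 x = x 0 ^ d := by
  simp [completeHomogeneous]

theorem completeHomogeneous_cons (d n : ℕ) (a : K) (x : Fin n → K) :
    completeHomogeneous d (n + 1) (Fin.cons a x) =
      ∑ p ∈ antidiagonal d, a ^ p.1 * completeHomogeneous p.2 n x := by
  simp only [completeHomogeneous, Nat.sum_antidiagonalTuple_succ, Fin.prod_univ_succ,
    Fin.cons_zero, Fin.cons_succ, mul_sum]

theorem completeHomogeneous_succ_cons (d n : ℕ) (a : K) (x : Fin n → K) :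
    completeHomogeneous (d + 1) (n + 1) (Fin.cons a x) =
      completeHomogeneous (d + 1) n x + a * completeHomogeneous d (n + 1) (Fin.cons a x) := by
  simp only [completeHomogeneous_cons, Nat.sum_antidiagonal_succ, pow_zero, one_mul, pow_succ,
    mul_sum]
  congr 1
  exact sum_congr rfl fun p _ => by ring

theorem completeHomogeneous_cons_one (d n : ℕ) (x : Fin n → K) :
    completeHomogeneous d (n + 1) (Fin.cons 1 x) =
      ∑ k ∈ range (d + 1), completeHomogeneous k n x := by
  induction d with
  | zero => simp
  | succ d ih => rw [completeHomogeneous_succ_cons, ih, one_mul, sum_range_succ _ (d + 1), add_comm]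

theorem sub_mul_completeHomogeneous_cons_cons (d n : ℕ) (u v : K) (x : Fin n → K) :
    (u - v) * completeHomogeneous d (n + 2) (Fin.cons u (Fin.cons v x)) =
      completeHomogeneous (d + 1) (n + 1) (Fin.cons u x) -
        completeHomogeneous (d + 1) (n + 1) (Fin.cons v x) := by
  induction d with
  | zero =>
    simp only [completeHomogeneous_succ_cons, completeHomogeneous_zero]
    ring
  | succ d ih =>
    have hu := completeHomogeneous_succ_cons (d + 1) n u x
    have hv := completeHomogeneous_succ_cons (d + 1) n v x
    have huv := completeHomogeneous_succ_cons d (n + 1) u (Fin.cons v x)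
    linear_combination (u - v) * huv + u * ih - hu + hv

/-- The divided difference `[y₀, …, y_m] tᵏ` of the monomial `tᵏ`, which is `S_{k-m}(y)` for
`m ≤ k` and vanishes for `k < m`. -/
noncomputable def powDividedDifference (m k : ℕ) (y : Fin (m + 1) → K) : K :=
  if m ≤ k then completeHomogeneous (k - m) (m + 1) y else 0

theorem powDividedDifference_of_lt {m k : ℕ} (h : k < m) (y : Fin (m + 1) → K) :
    powDividedDifference m k y = 0 :=
  if_neg (not_le.mpr h)

theorem sub_mul_powDividedDifference_cons_cons (m k : ℕ) (u v : K) (y : Fin m → K) :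
    (u - v) * powDividedDifference (m + 1) k (Fin.cons u (Fin.cons v y)) =
      powDividedDifference m k (Fin.cons u y) - powDividedDifference m k (Fin.cons v y) := by
  unfold powDividedDifference
  rcases lt_trichotomy k m with hk | rfl | hk
  · rw [if_neg (by omega), if_neg (by omega), if_neg (by omega), mul_zero, sub_zero]
  · rw [if_neg (by omega), if_pos le_rfl, if_pos le_rfl, mul_zero, Nat.sub_self,
      completeHomogeneous_zero, completeHomogeneous_zero, sub_self]
  · obtain ⟨d, rfl⟩ := Nat.exists_eq_add_of_lt hk
    rw [if_pos (by omega), if_pos (by omega), if_pos (by omega),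
      sub_mul_completeHomogeneous_cons_cons, show m + d + 1 - m = d + 1 by omega,
      show m + d + 1 - (m + 1) = d by omega]

end CommRing

theorem powDividedDifference_add_of_pow_eq_one {K : Type*} [CommRing K] [IsDomain K] {l : ℕ}
    (m k : ℕ) (y : Fin (m + 1) → K) (hy : Function.Injective y) (hroot : ∀ i, y i ^ l = 1) :
    powDividedDifference m (k + l) y = powDividedDifference m k y := by
  induction m with
  | zero => simp [powDividedDifference, completeHomogeneous_fin_one, pow_add, hroot]
  | succ m ih =>
    obtain ⟨u, y, rfl⟩ := Fin.exists_cons y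
    obtain ⟨v, t, rfl⟩ := Fin.exists_cons y
    rw [Fin.cons_injective_iff, Fin.cons_injective_iff, Fin.range_cons, Set.mem_insert_iff,
      not_or] at hy
    obtain ⟨⟨huv, hut⟩, hvt, ht⟩ := hy
    have hroot_cons (a : K) (ha : a ^ l = 1) : ∀ i, (Fin.cons a t : Fin (m + 1) → K) i ^ l = 1 :=
      fun i => Fin.cases ha (fun j => hroot j.succ.succ) i
    refine mul_left_cancel₀ (sub_ne_zero.mpr huv) ?_
    rw [sub_mul_powDividedDifference_cons_cons, sub_mul_powDividedDifference_cons_cons,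
      ih _ (Fin.cons_injective_of_injective hut ht) (hroot_cons u (hroot 0)),
      ih _ (Fin.cons_injective_of_injective hvt ht) (hroot_cons v (hroot 1))]

theorem stmt1 (K : Type*) [Field K] (l n : ℕ) (hl : 1 < l) (hn : 1 ≤ n)
    (x : Fin n → K) (hdist : Function.Injective x)
    (hroot : ∀ j, x j ^ l = 1) (hne1 : ∀ j, x j ≠ 1) :
    ∑ d ∈ Finset.range l, completeHomogeneous d n x = 0 := by
  have hy : Function.Injective (Fin.cons 1 x : Fin (n + 1) → K) :=
    Fin.cons_injective_of_injective (fun ⟨j, hj⟩ => hne1 j hj) hdist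
  have hyroot : ∀ i, (Fin.cons 1 x : Fin (n + 1) → K) i ^ l = 1 :=
    fun i => Fin.cases (one_pow l) hroot i
  have hsum : powDividedDifference n (n - 1 + l) (Fin.cons 1 x) =
      ∑ d ∈ range l, completeHomogeneous d n x := by
    rw [powDividedDifference, if_pos (by omega), completeHomogeneous_cons_one,
      show n - 1 + l - n + 1 = l by omega]
  rw [← hsum, powDividedDifference_add_of_pow_eq_one n (n - 1) _ hy hyroot,
    powDividedDifference_of_lt (by omega)]
end

section
/- Let K be a field, l > 1 an integer, q ∈ K an element such that q² is a primitive l-th root of unity, and let n be an integer with 1 ≤ n ≤ l−1. Then Σ_{i=0}^{l−1} S_{i,n}(1, q², q⁴, …, q^{2(n−1)}) = l · (∏_{j=1}^{n−1}(1 − q^{2j}))^{−1}, where the empty product (case n = 1) is 1 and each factor 1 − q^{2j} is nonzero since q² is a primitive l-th root of unity and 1 ≤ j ≤ n−1 < l. -/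
/-!
Put `ω = q²` and `h_d^{(m)} = S_{d,m}(1, ω, …, ω^{m-1})`. Splitting off the first variable (and
factoring `ω` out of the others) or the last one gives
`h_{d+1}^{(m+1)} = ω^{d+1} h_{d+1}^{(m)} + h_d^{(m+1)} = h_{d+1}^{(m)} + ω^m h_d^{(m+1)}`,
so `h_{l-1}^{(m+1)} = 0` whenever `ω^l = 1 ≠ ω^m`. Summing the second recursion over `d < l` then
gives `(1 - ω^m) Σ_{d<l} h_d^{(m+1)} = Σ_{d<l} h_d^{(m)}`, and the claim follows by induction on `m`
from `Σ_{d<l} h_d^{(1)} = l`.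
-/

open Finset

theorem Finset.Nat.sum_antidiagonalTuple_succ_insertNth {M : Type*} [AddCommMonoid M]
    {n : ℕ} (d : ℕ) (p : Fin (n + 1)) (g : (Fin (n + 1) → ℕ) → M) :
    ∑ f ∈ antidiagonalTuple (n + 1) d, g f =
      ∑ ab ∈ antidiagonal d, ∑ f ∈ antidiagonalTuple n ab.2, g (p.insertNth ab.1 f) := by
  rw [sum_sigma']
  refine sum_nbij' (fun f => ⟨(f p, ∑ i, f (p.succAbove i)), p.removeNth f⟩)
    (fun x => p.insertNth x.1.1 x.2) ?_ ?_ ?_ ?_ ?_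
  · intro f hf
    simp only [mem_antidiagonalTuple, Fin.sum_univ_succAbove _ p] at hf
    simp [hf, mem_antidiagonalTuple, Fin.removeNth_apply]
  · rintro ⟨⟨a, b⟩, f⟩ h
    simp only [mem_sigma, HasAntidiagonal.mem_antidiagonal, mem_antidiagonalTuple] at h
    simp [mem_antidiagonalTuple, Fin.sum_univ_succAbove _ p, h]
  · intro f _
    exact Fin.insertNth_self_removeNth p f
  · rintro ⟨⟨a, b⟩, f⟩ h
    simp only [mem_sigma, mem_antidiagonalTuple] at h
    simp [h.2]
  · intro f _
    rw [Fin.insertNth_self_removeNth]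

section

variable {R : Type*} [CommRing R]

theorem completeHomogeneous_zero_left (n : ℕ) (x : Fin n → R) :
    completeHomogeneous 0 n x = 1 := by
  simp [completeHomogeneous, Nat.antidiagonalTuple_zero_right]

theorem completeHomogeneous_one_right (d : ℕ) (x : Fin 1 → R) :
    completeHomogeneous d 1 x = x 0 ^ d := by
  simp [completeHomogeneous]

theorem completeHomogeneous_const_mul (d n : ℕ) (c : R) (x : Fin n → R) :
    completeHomogeneous d n (fun i => c * x i) = c ^ d * completeHomogeneous d n x := by
  simp only [completeHomogeneous, mul_sum]
  refine sum_congr rfl fun f hf => ?_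
  rw [Nat.mem_antidiagonalTuple] at hf
  simp_rw [mul_pow, prod_mul_distrib, prod_pow_eq_pow_sum, hf]

theorem completeHomogeneous_succ_succ (d m : ℕ) (p : Fin (m + 1)) (x : Fin (m + 1) → R) :
    completeHomogeneous (d + 1) (m + 1) x =
      completeHomogeneous (d + 1) m (x ∘ p.succAbove) + x p * completeHomogeneous d (m + 1) x := by
  simp [completeHomogeneous, Nat.sum_antidiagonalTuple_succ_insertNth _ p,
    Nat.sum_antidiagonal_succ, mul_sum, Fin.prod_univ_succAbove _ p, pow_succ', mul_assoc]

noncomputable def completeHomogeneousGeom (ω : R) (d m : ℕ) : R :=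
  completeHomogeneous d m fun j : Fin m => ω ^ (j : ℕ)

theorem completeHomogeneousGeom_succ_succ_first (ω : R) (d m : ℕ) :
    completeHomogeneousGeom ω (d + 1) (m + 1) =
      ω ^ (d + 1) * completeHomogeneousGeom ω (d + 1) m + completeHomogeneousGeom ω d (m + 1) := by
  rw [completeHomogeneousGeom, completeHomogeneous_succ_succ _ _ 0]
  simp [Function.comp_def, pow_succ', completeHomogeneous_const_mul, completeHomogeneousGeom]

theorem completeHomogeneousGeom_succ_succ_last (ω : R) (d m : ℕ) :
    completeHomogeneousGeom ω (d + 1) (m + 1) =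
      completeHomogeneousGeom ω (d + 1) m + ω ^ m * completeHomogeneousGeom ω d (m + 1) := by
  rw [completeHomogeneousGeom, completeHomogeneous_succ_succ _ _ (Fin.last m)]
  simp [Function.comp_def, completeHomogeneousGeom]

theorem completeHomogeneousGeom_eq_zero [NoZeroDivisors R] {ω : R} {d m : ℕ}
    (hd : ω ^ (d + 1) = 1) (hm : ω ^ m ≠ 1) : completeHomogeneousGeom ω d (m + 1) = 0 := by
  have h := (completeHomogeneousGeom_succ_succ_first ω d m).symm.trans
    (completeHomogeneousGeom_succ_succ_last ω d m)
  rw [hd, one_mul] at h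
  have : (1 - ω ^ m) * completeHomogeneousGeom ω d (m + 1) = 0 := by linear_combination h
  exact (mul_eq_zero.mp this).resolve_left (sub_ne_zero.mpr hm.symm)

theorem sum_range_completeHomogeneousGeom_succ_mul [NoZeroDivisors R] {ω : R} {l m : ℕ}
    (hl : ω ^ l = 1) (hm : ω ^ m ≠ 1) :
    (∑ i ∈ range l, completeHomogeneousGeom ω i (m + 1)) * (1 - ω ^ m) =
      ∑ i ∈ range l, completeHomogeneousGeom ω i m := by
  obtain _ | k := l
  · simp
  have hk : completeHomogeneousGeom ω k (m + 1) = 0 := completeHomogeneousGeom_eq_zero hl hm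
  have h₀ (m' : ℕ) : completeHomogeneousGeom ω 0 m' = (1 : R) := completeHomogeneous_zero_left _ _
  have hS : ∑ i ∈ range (k + 1), completeHomogeneousGeom ω i (m + 1) =
      ∑ i ∈ range (k + 1), completeHomogeneousGeom ω i m +
        ω ^ m * ∑ i ∈ range (k + 1), completeHomogeneousGeom ω i (m + 1) :=
    calc _ = ∑ i ∈ range k, completeHomogeneousGeom ω (i + 1) (m + 1) + 1 := by
          rw [sum_range_succ', h₀]
      _ = ∑ i ∈ range k, completeHomogeneousGeom ω (i + 1) m +
            ω ^ m * ∑ i ∈ range k, completeHomogeneousGeom ω i (m + 1) + 1 := by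
          simp only [completeHomogeneousGeom_succ_succ_last, sum_add_distrib, mul_sum]
      _ = _ := by
          rw [sum_range_succ' (completeHomogeneousGeom ω · m) k,
            sum_range_succ (completeHomogeneousGeom ω · (m + 1)) k, hk, h₀]
          ring
  linear_combination hS

theorem IsPrimitiveRoot.sum_range_completeHomogeneousGeom_mul_prod [NoZeroDivisors R] {ω : R}
    {l m : ℕ} (hω : IsPrimitiveRoot ω l) (hm : m < l) :
    (∑ i ∈ range l, completeHomogeneousGeom ω i (m + 1)) * ∏ j ∈ Icc 1 m, (1 - ω ^ j) = l := by
  induction m with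
  | zero => simp [completeHomogeneousGeom, completeHomogeneous_one_right]
  | succ m ih =>
    rw [prod_Icc_succ_top (by omega), ← mul_assoc, mul_right_comm,
      sum_range_completeHomogeneousGeom_succ_mul hω.pow_eq_one
        (hω.pow_ne_one_of_pos_of_lt m.succ_ne_zero hm)]
    exact ih (by omega)

end

theorem stmt2_general (K : Type*) [Field K] (l n : ℕ) (q : K)
    (hq : IsPrimitiveRoot (q ^ 2) l) (hn1 : 1 ≤ n) (hnl : n ≤ l - 1) :
    ∑ i ∈ Finset.range l,
        completeHomogeneous i n (fun j : Fin n => q ^ (2 * (j : ℕ))) =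
      (l : K) * (∏ j ∈ Finset.Icc 1 (n - 1), (1 - q ^ (2 * j)))⁻¹ := by
  obtain ⟨m, rfl⟩ : ∃ m, n = m + 1 := ⟨n - 1, by omega⟩
  have hprod : ∏ j ∈ Icc 1 m, (1 - (q ^ 2) ^ j) ≠ 0 := prod_ne_zero_iff.mpr fun j hj =>
    sub_ne_zero.mpr (hq.pow_ne_one_of_pos_of_lt (by grind) (by grind)).symm
  simp_rw [pow_mul, Nat.add_sub_cancel, eq_mul_inv_iff_mul_eq₀ hprod]
  exact hq.sum_range_completeHomogeneousGeom_mul_prod (by omega)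

theorem stmt2 (K : Type*) [Field K] (l n : ℕ) (hl : 1 < l) (q : K)
    (hq : IsPrimitiveRoot (q ^ 2) l) (hn1 : 1 ≤ n) (hnl : n ≤ l - 1) :
    ∑ i ∈ Finset.range l,
        completeHomogeneous i n (fun j : Fin n => q ^ (2 * (j : ℕ))) =
      (l : K) * (∏ j ∈ Finset.Icc 1 (n - 1), (1 - q ^ (2 * j)))⁻¹ :=
  stmt2_general K l n q hq hn1 hnl
end

section
/- Let s be an integer with 1 ≤ s ≤ l−1 and let c ∈ ℤ satisfy c ≡ 2s (mod l). Then κ_{−s} · [K;c;s] = 0 in A. (This is the key vanishing identity of the paper: in its notation, κ_{la+lb−s}·[K; 2s−la−lb; s] = κ_{−s}·[K; 2s−la−lb; s] = 0 for every s ≥ 1 not divisible by l.) -/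
open Polynomial

/-- The group algebra `A = F[K]/(K^{2l} − 1)` of the cyclic group of order `2l` over `F`,
realized as a quotient of the polynomial ring. -/
abbrev QA (F : Type*) [Field F] (l : ℕ) : Type _ :=
  Polynomial F ⧸ Ideal.span {(X : Polynomial F) ^ (2 * l) - 1}

/-- The image `K` of the canonical generator in `A = F[K]/(K^{2l} − 1)`. -/
noncomputable def KK (F : Type*) [Field F] (l : ℕ) : QA F l :=
  Ideal.Quotient.mk (Ideal.span {(X : Polynomial F) ^ (2 * l) - 1}) X

/-- The inverse `K⁻¹ = K^{2l−1}` of `K` in `A` (since `K^{2l} = 1`). -/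
noncomputable def KKinv (F : Type*) [Field F] (l : ℕ) : QA F l :=
  KK F l ^ (2 * l - 1)

/-- `κ_n = (2l)⁻¹ Σ_{i=0}^{2l−1} q^{−2ni} K^i ∈ A`. -/
noncomputable def kappa (F : Type*) [Field F] (l : ℕ) (q : F) (n : ℤ) : QA F l :=
  (((2 * l : ℕ) : F))⁻¹ • ∑ i ∈ Finset.range (2 * l), q ^ (-2 * n * (i : ℤ)) • KK F l ^ i

/-- `[K;c;m] = ∏_{h=1}^{m} (K q^{c−h+1} − K⁻¹ q^{−(c−h+1)}) / (q^h − q^{−h}) ∈ A`. -/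
noncomputable def Kbinom (F : Type*) [Field F] (l : ℕ) (q : F) (c : ℤ) (m : ℕ) : QA F l :=
  ∏ h ∈ Finset.Icc 1 m,
    (q ^ (h : ℤ) - q ^ (-(h : ℤ)))⁻¹ •
      (q ^ (c - h + 1) • KK F l - q ^ (-(c - h + 1)) • KKinv F l)

/-! `κ_n` is, up to the factor `(2l)⁻¹`, the geometric sum of `y = q^{−2n} K`, and `y^{2l} = 1`.
Hence `κ_n y = κ_n`, i.e. `κ_n` is an eigenvector for multiplication by `K` with eigenvalue
`q^{2n}` (and by `K⁻¹` with eigenvalue `q^{−2n}`). The factor `h = 1` of `[K;c;s]` is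
`q^c K − q^{−c} K⁻¹`, which therefore acts on `κ_{−s}` by `q^{c−2s} − q^{−(c−2s)} = 0`. -/

theorem geom_sum_mul_of_pow_eq_one {R : Type*} [Ring R] {x : R} {n : ℕ} (h : x ^ n = 1) :
    (∑ i ∈ Finset.range n, x ^ i) * x = ∑ i ∈ Finset.range n, x ^ i := by
  have := geom_sum_mul x n
  rwa [h, sub_self, mul_sub, mul_one, sub_eq_zero] at this

section

variable {F : Type*} [Field F] {l : ℕ} {q : F}

theorem KK_pow_two_mul : KK F l ^ (2 * l) = 1 := by
  rw [KK, ← map_pow, ← sub_eq_zero, ← map_one (Ideal.Quotient.mk _), ← map_sub,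
    Ideal.Quotient.eq_zero_iff_mem]
  exact Ideal.subset_span rfl

theorem KK_mul_KKinv (hl : 0 < l) : KK F l * KKinv F l = 1 := by
  rw [KKinv, ← pow_succ', Nat.sub_add_cancel (by omega), KK_pow_two_mul]

theorem kappa_eq_smul_geom_sum (n : ℤ) :
    kappa F l q n = ((2 * l : ℕ) : F)⁻¹ •
      ∑ i ∈ Finset.range (2 * l), (q ^ (-2 * n) • KK F l) ^ i := by
  simp only [kappa, _root_.smul_pow, ← zpow_natCast, ← zpow_mul]

theorem kappa_mul_smul_KK (hq : q ^ l = 1) (n : ℤ) :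
    kappa F l q n * (q ^ (-2 * n) • KK F l) = kappa F l q n := by
  have hpow : (q ^ (-2 * n) • KK F l) ^ (2 * l) = 1 := by
    rw [_root_.smul_pow, KK_pow_two_mul, ← zpow_natCast, ← zpow_mul,
      show -2 * n * ((2 * l : ℕ) : ℤ) = l * (-4 * n) by push_cast; ring,
      zpow_mul, zpow_natCast, hq, one_zpow, one_smul]
  rw [kappa_eq_smul_geom_sum, smul_mul_assoc, geom_sum_mul_of_pow_eq_one hpow]

theorem kappa_mul_KK (hl : 0 < l) (hq : q ^ l = 1) (n : ℤ) :
    kappa F l q n * KK F l = q ^ (2 * n) • kappa F l q n := by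
  have hq0 : q ≠ 0 := ne_zero_pow hl.ne' (by simp [hq])
  conv_rhs => rw [← kappa_mul_smul_KK hq n]
  rw [mul_smul_comm, smul_smul, ← zpow_add₀ hq0, show 2 * n + -2 * n = 0 by ring,
    zpow_zero, one_smul]

theorem kappa_mul_KKinv (hl : 0 < l) (hq : q ^ l = 1) (n : ℤ) :
    kappa F l q n * KKinv F l = q ^ (-2 * n) • kappa F l q n := by
  have hq0 : q ≠ 0 := ne_zero_pow hl.ne' (by simp [hq])
  conv_lhs => rw [← kappa_mul_smul_KK hq n]
  rw [mul_smul_comm, smul_mul_assoc, mul_assoc, KK_mul_KKinv hl, mul_one]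

theorem kappa_mul_KK_sub_KKinv_eq_zero (hl : 0 < l) (hq : q ^ l = 1) {n c : ℤ}
    (hc : (l : ℤ) ∣ c + 2 * n) :
    kappa F l q n * (q ^ c • KK F l - q ^ (-c) • KKinv F l) = 0 := by
  have hq0 : q ≠ 0 := ne_zero_pow hl.ne' (by simp [hq])
  obtain ⟨k, hk⟩ := hc
  have hqc : q ^ (c + 2 * n) = 1 := by rw [hk, zpow_mul, zpow_natCast, hq, one_zpow]
  rw [mul_sub, mul_smul_comm, mul_smul_comm, kappa_mul_KK hl hq, kappa_mul_KKinv hl hq,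
    smul_smul, smul_smul, ← zpow_add₀ hq0, ← zpow_add₀ hq0,
    show -c + -2 * n = -(c + 2 * n) by ring, zpow_neg, hqc, inv_one, sub_self]

theorem KK_sub_KKinv_dvd_Kbinom {m : ℕ} (hm : 1 ≤ m) (c : ℤ) :
    q ^ c • KK F l - q ^ (-c) • KKinv F l ∣ Kbinom F l q c m := by
  rw [Kbinom, ← Finset.mul_prod_erase _ _ (Finset.mem_Icc.2 ⟨le_rfl, hm⟩)]
  refine Dvd.dvd.mul_right ?_ _
  rw [Nat.cast_one, sub_add_cancel]
  exact Dvd.intro _ (mul_smul_one _ _)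

end

theorem stmt3_general (l : ℕ) (hl : 1 < l)
    (F : Type*) [Field F]
    (q : F) (hq : IsPrimitiveRoot q l)
    (s : ℕ) (hs1 : 1 ≤ s)
    (c : ℤ) (hc : (l : ℤ) ∣ c - 2 * s) :
    kappa F l q (-(s : ℤ)) * Kbinom F l q c s = 0 := by
  obtain ⟨r, hr⟩ := KK_sub_KKinv_dvd_Kbinom (F := F) (l := l) (q := q) hs1 c
  have hc' : (l : ℤ) ∣ c + 2 * -(s : ℤ) := by rwa [mul_neg, ← sub_eq_add_neg]
  rw [hr, ← mul_assoc, kappa_mul_KK_sub_KKinv_eq_zero (by omega) hq.pow_eq_one hc', zero_mul]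

theorem stmt3 (l : ℕ) (hl : 1 < l) (hodd : Odd l)
    (F : Type*) [Field F] (hchar : ((2 * l : ℕ) : F) ≠ 0)
    (q : F) (hq : IsPrimitiveRoot q l)
    (s : ℕ) (hs1 : 1 ≤ s) (hsl : s ≤ l - 1)
    (c : ℤ) (hc : (l : ℤ) ∣ c - 2 * s) :
    kappa F l q (-(s : ℤ)) * Kbinom F l q c s = 0 :=
  stmt3_general l hl F q hq s hs1 c hc
end

section
/- For every n ∈ ℤ one has κ_n = (1/2) · Σ_{i=0}^{l−1} (−1)^i [K;−2n;i] (q^i + q^{−i−2n} K) in A. -/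
open Polynomial

/-!
Evaluating `K` at the `2l`-th roots of unity `a` separates the points of `A`, since `-q` is a
primitive `2l`-th root of unity and `X ^ (2l) - 1` has distinct roots. At `K = a` the element `κ_n`
becomes the indicator of `q ^ (-2n) * a = 1`. Writing `a = ε q ^ s` with `ε = ±1`, the element
`[K;c;i]` becomes `ε ^ i` times the Gaussian binomial `[c + s; i]`, and the Pascal rule turns the
right-hand side into a telescoping sum equal to `(1 + ε q ^ t) [t - 1; l - 1] / 2`, `t = s - 2n`.
This is `1` if `ε q ^ t = 1` and `0` otherwise, because `[t - 1; l - 1]` is `1` when `l ∣ t`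
and `0` when not.
-/

namespace KappaExpansion

open Finset

variable {F : Type*} [Field F]

def qInt (q : F) (m : ℤ) : F := q ^ m - q ^ (-m)

/-- The Gaussian binomial `[t; i]`, written with the unnormalised quantum integers `qInt`;
it is the value of `[K;t;i]` at `K = 1`. -/
def qBinom (q : F) (t : ℤ) (i : ℕ) : F :=
  ∏ h ∈ Icc 1 i, (qInt q h)⁻¹ * qInt q (t - h + 1)

@[simp]
lemma qBinom_zero (q : F) (t : ℤ) : qBinom q t 0 = 1 := by simp [qBinom]

lemma qBinom_succ (q : F) (t : ℤ) (i : ℕ) :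
    qBinom q t (i + 1) = qBinom q t i * ((qInt q (i + 1))⁻¹ * qInt q (t - i)) := by
  rw [qBinom, prod_Icc_succ_top (by omega), qBinom]
  push_cast
  ring_nf

lemma qBinom_succ_succ (q : F) (t : ℤ) (i : ℕ) :
    qBinom q (t + 1) (i + 1) = (qInt q (i + 1))⁻¹ * qInt q (t + 1) * qBinom q t i := by
  induction i with
  | zero => simp [qBinom_succ]
  | succ i ih =>
    rw [qBinom_succ, ih, qBinom_succ]
    push_cast
    ring_nf

variable {q ε : F} {l : ℕ}

lemma qInt_mul_add_eq (hq : q ≠ 0) (hε : ε * ε = 1) (t i : ℤ) :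
    (q ^ i + ε * q ^ (t - i)) * qInt q t =
      (1 + ε * q ^ t) * (qInt q (t - i) + ε * qInt q i) := by
  simp only [qInt, zpow_sub₀ hq, zpow_neg]
  field_simp
  linear_combination (q ^ t) ^ 2 * (1 - (q ^ i) ^ 2) * hε

lemma qBinom_telescope (hq : q ≠ 0) (hε : ε * ε = 1) (t : ℤ) {i : ℕ}
    (hi : qInt q (i + 1) ≠ 0) :
    (q ^ ((i : ℤ) + 1) + ε * q ^ (t - (i + 1))) * qBinom q t (i + 1) =
      (1 + ε * q ^ t) * (qBinom q (t - 1) (i + 1) + ε * qBinom q (t - 1) i) := by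
  obtain ⟨s, rfl⟩ : ∃ s, t = s + 1 := ⟨t - 1, by ring⟩
  have key := qInt_mul_add_eq hq hε (s + 1) (i + 1)
  rw [show s + 1 - (i + 1) = s - i by ring] at key ⊢
  rw [qBinom_succ_succ, add_sub_cancel_right, qBinom_succ]
  linear_combination (qInt q (i + 1))⁻¹ * qBinom q s i * key +
    (1 + ε * q ^ (s + 1)) * ε * qBinom q s i * inv_mul_cancel₀ hi

lemma sum_qBinom_eq_mul_qBinom (hq : q ≠ 0) (hε : ε * ε = 1) (t : ℤ) {N : ℕ}
    (hN : ∀ h : ℕ, 0 < h → h ≤ N → qInt q h ≠ 0) :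
    ∑ i ∈ range (N + 1), (-ε) ^ i * qBinom q t i * (q ^ (i : ℤ) + ε * q ^ (t - i)) =
      (1 + ε * q ^ t) * ((-ε) ^ N * qBinom q (t - 1) N) := by
  induction N with
  | zero => simp
  | succ N ih =>
    rw [sum_range_succ, ih fun h h0 hh => hN h h0 (by omega)]
    have step := qBinom_telescope hq hε t (hN (N + 1) (by omega) le_rfl)
    push_cast
    linear_combination (-ε) ^ (N + 1) * step - (1 + ε * q ^ t) * (-ε) ^ N * qBinom q (t - 1) N * hε

lemma qInt_eq_zero_of_zpow_eq_one {m : ℤ} (hm : q ^ m = 1) : qInt q m = 0 := by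
  simp [qInt, zpow_neg, hm]

lemma qInt_sub_of_zpow_eq_one (hq : q ≠ 0) {t : ℤ} (ht : q ^ t = 1) (h : ℤ) :
    qInt q (t - h) = -qInt q h := by
  simp [qInt, zpow_sub₀ hq, zpow_neg, ht]

lemma qInt_ne_zero (hq : IsPrimitiveRoot q l) (hodd : Odd l) {h : ℕ} (h0 : 0 < h) (hl : h < l) :
    qInt q h ≠ 0 := by
  intro hzero
  have hq0 : q ≠ 0 := hq.ne_zero (by omega)
  have hsq : q ^ (h : ℤ) * q ^ (h : ℤ) = 1 :=
    (mul_eq_one_iff_eq_inv₀ (zpow_ne_zero _ hq0)).2 (by rw [← zpow_neg]; exact sub_eq_zero.1 hzero)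
  have h2h : q ^ (2 * h) = 1 := by
    rw [two_mul, pow_add]
    exact_mod_cast hsq
  have := Nat.le_of_dvd h0 <| hodd.coprime_two_right.dvd_of_dvd_mul_left <|
    (hq.pow_eq_one_iff_dvd _).1 h2h
  omega

lemma qBinom_sub_one_of_zpow_eq_one (hq : IsPrimitiveRoot q l) (hodd : Odd l) {t : ℤ}
    (ht : q ^ t = 1) : qBinom q (t - 1) (l - 1) = 1 := by
  have hq0 : q ≠ 0 := hq.ne_zero hodd.pos.ne'
  have hfactor : ∀ h ∈ Icc 1 (l - 1), (qInt q h)⁻¹ * qInt q (t - 1 - h + 1) = -1 := by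
    intro h hh
    rw [mem_Icc] at hh
    rw [show t - 1 - h + 1 = t - h by ring, qInt_sub_of_zpow_eq_one hq0 ht,
      mul_neg, inv_mul_cancel₀ (qInt_ne_zero hq hodd (by omega) (by omega))]
  rw [qBinom, prod_congr rfl hfactor, prod_const, Nat.card_Icc, Nat.add_sub_cancel,
    (Nat.Odd.sub_odd hodd odd_one).neg_one_pow]

lemma qBinom_sub_one_of_zpow_ne_one (hq : IsPrimitiveRoot q l) (hodd : Odd l) {t : ℤ}
    (ht : q ^ t ≠ 1) : qBinom q (t - 1) (l - 1) = 0 := by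
  have hl : (0 : ℤ) < l := by exact_mod_cast hodd.pos
  obtain ⟨h, hh⟩ : ∃ h : ℕ, (h : ℤ) = t % l :=
    ⟨(t % l).toNat, Int.toNat_of_nonneg (Int.emod_nonneg t hl.ne')⟩
  have h0 : h ≠ 0 := by
    rintro rfl
    exact ht ((hq.zpow_eq_one_iff_dvd t).2 (Int.dvd_of_emod_eq_zero hh.symm))
  have hlt : (h : ℤ) < l := hh ▸ Int.emod_lt_of_pos t hl
  refine prod_eq_zero (i := h) (mem_Icc.2 ⟨by omega, by omega⟩) ?_
  rw [show t - 1 - h + 1 = l * (t / l) by rw [hh, Int.emod_def]; ring,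
    qInt_eq_zero_of_zpow_eq_one ((hq.zpow_eq_one_iff_dvd _).2 (dvd_mul_right _ _)), mul_zero]

open scoped Classical in
lemma sum_range_qBinom_eq_ite (hq : IsPrimitiveRoot q l) (hodd : Odd l) (h2 : (2 : F) ≠ 0)
    (hε : ε * ε = 1) (t : ℤ) :
    ∑ i ∈ range l, (-ε) ^ i * qBinom q t i * (q ^ (i : ℤ) + ε * q ^ (t - i)) =
      if ε * q ^ t = 1 then 2 else 0 := by
  have hq0 : q ≠ 0 := hq.ne_zero hodd.pos.ne'
  have hsign : (-ε) ^ (l - 1) = 1 := by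
    obtain ⟨k, hk⟩ := Nat.Odd.sub_odd hodd odd_one
    rw [hk, ← two_mul, pow_mul, neg_sq, sq, hε, one_pow]
  rw [← Nat.sub_add_cancel hodd.pos, sum_qBinom_eq_mul_qBinom hq0 hε t
    fun h h0 hh => qInt_ne_zero hq hodd h0 (by omega), hsign, one_mul]
  have hε' : ε = 1 ∨ ε = -1 := mul_self_eq_one_iff.1 hε
  by_cases ht : q ^ t = 1
  · rw [qBinom_sub_one_of_zpow_eq_one hq hodd ht, ht, mul_one, mul_one]
    rcases hε' with rfl | rfl
    · norm_num
    · rw [if_neg fun h => h2 (by linear_combination -h)]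
      ring
  · rw [qBinom_sub_one_of_zpow_ne_one hq hodd ht, mul_zero, if_neg]
    intro h
    have hqt : q ^ t = ε := by linear_combination ε * h - q ^ t * hε
    have hε1 : ε = -1 := hε'.resolve_left (hqt ▸ ht)
    have hl : (q ^ t) ^ l = 1 := by
      rw [← zpow_natCast, ← zpow_mul, mul_comm, zpow_mul, zpow_natCast, hq.pow_eq_one, one_zpow]
    rw [hqt, hε1, hodd.neg_one_pow] at hl
    exact h2 (by linear_combination -hl)

lemma isPrimitiveRoot_neg_of_odd (hq : IsPrimitiveRoot q l) (hodd : Odd l) (h2 : (2 : F) ≠ 0) :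
    IsPrimitiveRoot (-q) (2 * l) := by
  have hchar : ringChar F ≠ 2 := fun h => h2 (by exact_mod_cast h ▸ ringChar.Nat.cast_ringChar)
  have h2l : (orderOf (-1 : F)).Coprime (orderOf q) := by
    rw [orderOf_neg_one, if_neg hchar, ← hq.eq_orderOf]
    exact Nat.coprime_comm.1 hodd.coprime_two_right
  rw [IsPrimitiveRoot.iff_orderOf, neg_eq_neg_one_mul,
    (Commute.all _ _).orderOf_mul_eq_mul_orderOf_of_coprime h2l, ← hq.eq_orderOf, orderOf_neg_one,
    if_neg hchar]

section CyclicAlgebra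

variable (F) {n : ℕ}

noncomputable def evalAt (a : F) (ha : a ^ n = 1) :
    F[X] ⧸ Ideal.span {(X : F[X]) ^ n - 1} →ₐ[F] F :=
  Ideal.Quotient.liftₐ _ (aeval a) fun p hp => by
    obtain ⟨c, rfl⟩ := Ideal.mem_span_singleton'.1 hp
    simp [ha]

variable {F}

@[simp]
lemma evalAt_mk (a : F) (ha : a ^ n = 1) (p : F[X]) :
    evalAt F a ha (Ideal.Quotient.mk _ p) = aeval a p := rfl

lemma eq_of_forall_evalAt_eq [NeZero n] {ζ : F} (hζ : IsPrimitiveRoot ζ n)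
    {x y : F[X] ⧸ Ideal.span {(X : F[X]) ^ n - 1}}
    (h : ∀ a (ha : a ^ n = 1), evalAt F a ha x = evalAt F a ha y) : x = y := by
  obtain ⟨p, rfl⟩ := Ideal.Quotient.mk_surjective x
  obtain ⟨r, rfl⟩ := Ideal.Quotient.mk_surjective y
  rw [Ideal.Quotient.eq, Ideal.mem_span_singleton, X_pow_sub_one_eq_prod (NeZero.pos n) hζ]
  refine prod_dvd_of_coprime ((pairwise_coprime_X_sub_C Function.injective_id).set_pairwise _)
    fun a ha => dvd_iff_isRoot.2 ?_
  have ha := (mem_nthRootsFinset (NeZero.pos n) 1).1 ha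
  simpa [sub_eq_zero] using h a ha

end CyclicAlgebra

section GroupAlgebra

variable {a : F}

@[simp]
lemma evalAt_KK (ha : a ^ (2 * l) = 1) : evalAt F a ha (KK F l) = a := by
  simp [KK]

lemma evalAt_KKinv (hl : l ≠ 0) (ha : a ^ (2 * l) = 1) : evalAt F a ha (KKinv F l) = a⁻¹ := by
  have ha0 : a ≠ 0 := by
    rintro rfl
    simp [hl] at ha
  rw [KKinv, map_pow, evalAt_KK, pow_sub₀ a ha0 (by omega), ha, pow_one, one_mul]

lemma evalAt_Kbinom (hl : l ≠ 0) (ha : a ^ (2 * l) = 1) (hq : q ≠ 0) (hε : ε * ε = 1) {s : ℤ}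
    (has : a = ε * q ^ s) (c : ℤ) (i : ℕ) :
    evalAt F a ha (Kbinom F l q c i) = ε ^ i * qBinom q (c + s) i := by
  have hainv : a⁻¹ = ε * q ^ (-s) := by
    rw [has, mul_inv, inv_eq_of_mul_eq_one_right hε, zpow_neg]
  rw [Kbinom, map_prod, qBinom, show ε ^ i = ∏ _h ∈ Icc 1 i, ε by simp, ← prod_mul_distrib]
  refine prod_congr (by simp) fun h _ => ?_
  rw [map_smul, map_sub, map_smul, map_smul, evalAt_KK, evalAt_KKinv hl, hainv, has, qInt, qInt,
    show c + s - h + 1 = (c - h + 1) + s by ring, zpow_add₀ hq (c - h + 1),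
    neg_add (c - h + 1), zpow_add₀ hq (-(c - h + 1))]
  simp only [smul_eq_mul]
  ring

lemma evalAt_expansion_term (hl : l ≠ 0) (ha : a ^ (2 * l) = 1) (hq : q ≠ 0) (hε : ε * ε = 1)
    {s : ℤ} (has : a = ε * q ^ s) (n : ℤ) (i : ℕ) :
    evalAt F a ha ((-1 : F) ^ i •
        (Kbinom F l q (-2 * n) i *
          (algebraMap F (QA F l) (q ^ (i : ℤ)) + q ^ (-(i : ℤ) - 2 * n) • KK F l))) =
      (-ε) ^ i * qBinom q (-2 * n + s) i * (q ^ (i : ℤ) + ε * q ^ (-2 * n + s - i)) := by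
  rw [map_smul, map_mul, map_add, AlgHom.commutes, map_smul, evalAt_KK,
    evalAt_Kbinom hl ha hq hε has, has, show -2 * n + s - i = (-i - 2 * n) + s by ring,
    zpow_add₀ hq, Algebra.algebraMap_self_apply, smul_eq_mul, smul_eq_mul, neg_pow ε]
  ring

open scoped Classical in
lemma evalAt_kappa (hchar : ((2 * l : ℕ) : F) ≠ 0) (hq : q ^ l = 1) (ha : a ^ (2 * l) = 1)
    (n : ℤ) : evalAt F a ha (kappa F l q n) = if q ^ (-2 * n) * a = 1 then 1 else 0 := by
  have hterm : ∀ i : ℕ, evalAt F a ha (q ^ (-2 * n * i) • KK F l ^ i) = (q ^ (-2 * n) * a) ^ i := by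
    intro i
    rw [map_smul, map_pow, evalAt_KK, smul_eq_mul, mul_pow, zpow_mul, zpow_natCast]
  rw [kappa, map_smul, map_sum]
  simp only [hterm]
  split_ifs with hr
  · simp only [hr, one_pow, sum_const, card_range, nsmul_eq_mul, mul_one, smul_eq_mul]
    exact inv_mul_cancel₀ hchar
  · have hr2l : (q ^ (-2 * n) * a) ^ (2 * l) = 1 := by
      rw [mul_pow, ha, mul_one, ← zpow_natCast, ← zpow_mul,
        show -2 * n * ((2 * l : ℕ) : ℤ) = l * (-4 * n) by push_cast; ring, zpow_mul, zpow_natCast,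
        hq, one_zpow]
    rw [geom_sum_eq hr, hr2l, sub_self, zero_div, smul_zero]

end GroupAlgebra

end KappaExpansion

open KappaExpansion

theorem stmt4_general (l : ℕ) (hodd : Odd l)
    (F : Type*) [Field F] (hchar : ((2 * l : ℕ) : F) ≠ 0)
    (q : F) (hq : IsPrimitiveRoot q l) (n : ℤ) :
    kappa F l q n =
      (2 : F)⁻¹ • ∑ i ∈ Finset.range l,
        (-1 : F) ^ i •
          (Kbinom F l q (-2 * n) i *
            (algebraMap F (QA F l) (q ^ (i : ℤ)) + q ^ (-(i : ℤ) - 2 * n) • KK F l)) := by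
  have hl : l ≠ 0 := hodd.pos.ne'
  have hq0 : q ≠ 0 := hq.ne_zero hl
  have h2 : (2 : F) ≠ 0 := by
    push_cast at hchar
    exact left_ne_zero_of_mul hchar
  have hneg := isPrimitiveRoot_neg_of_odd hq hodd h2
  have : NeZero (2 * l) := ⟨by omega⟩
  refine eq_of_forall_evalAt_eq hneg fun a ha => ?_
  obtain ⟨k, -, rfl⟩ := hneg.eq_pow_of_pow_eq_one ha
  set ε : F := (-1) ^ k
  have hε : ε * ε = 1 := by rw [← mul_pow, neg_one_mul, neg_neg, one_pow]
  have hk : (-q) ^ k = ε * q ^ (k : ℤ) := by rw [neg_pow, zpow_natCast]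
  have hcond : q ^ (-2 * n) * (-q) ^ k = ε * q ^ (-2 * n + k) := by
    rw [hk, zpow_add₀ hq0]
    ring
  rw [evalAt_kappa hchar hq.pow_eq_one, hcond, map_smul, map_sum]
  simp_rw [evalAt_expansion_term hl ha hq0 hε hk]
  rw [sum_range_qBinom_eq_ite hq hodd h2 hε]
  split_ifs <;> simp [h2]

theorem stmt4 (l : ℕ) (hl : 1 < l) (hodd : Odd l)
    (F : Type*) [Field F] (hchar : ((2 * l : ℕ) : F) ≠ 0)
    (q : F) (hq : IsPrimitiveRoot q l) (n : ℤ) :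
    kappa F l q n =
      (2 : F)⁻¹ • ∑ i ∈ Finset.range l,
        (-1 : F) ^ i •
          (Kbinom F l q (-2 * n) i *
            (algebraMap F (QA F l) (q ^ (i : ℤ)) + q ^ (-(i : ℤ) - 2 * n) • KK F l)) :=
  stmt4_general l hodd F hchar q hq n
end

section
/- For every n ∈ ℤ one has κ̄_n = (1/2) · Σ_{i=0}^{l−1} [K;−2n;i] (q^i − q^{−i−2n} K) in A. -/
open Polynomial

/-- `κ̄_n = (2l)⁻¹ Σ_{i=0}^{2l−1} q^{−2ni} (−K)^i ∈ A`. -/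
noncomputable def kappaBar (F : Type*) [Field F] (l : ℕ) (q : F) (n : ℤ) : QA F l :=
  (((2 * l : ℕ) : F))⁻¹ • ∑ i ∈ Finset.range (2 * l), q ^ (-2 * n * (i : ℤ)) • (-KK F l) ^ i

/-!
Evaluation at the `2l`-th roots of unity `ζ` identifies `A` with `F^{2l}`, because `-q` is a
primitive `2l`-th root of unity when `l` is odd; so it suffices to compare the images of both
sides. Put `u = q^{-2n} ζ`. Then `κ̄_n` maps to a geometric sum, which is `[u = -1]`, and
`[K; -2n; i]` maps to the Gaussian binomial `[u; i]`. Pascal's rule makes the right-hand side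
telescope to `½ (1 - u) [u/q; l-1]`. For `u = -1` the last factor is `1`; for `u ≠ ±1` one has
`u² = q^{2h}` with `0 < h < l`, because `q²` is a primitive `l`-th root of unity, and this kills
a factor of the numerator of `[u/q; l-1]`.
-/

open Finset

section RootsOfUnity

variable {F : Type*} [Field F]

lemma sub_inv_eq_zero_iff {x : F} (hx : x ≠ 0) : x - x⁻¹ = 0 ↔ x ^ 2 = 1 := by
  rw [sub_eq_zero, ← mul_eq_one_iff_eq_inv₀ hx, sq]

lemma inv_mul_geom_sum_of_pow_eq_one [DecidableEq F] {r : F} {n : ℕ} (hn : (n : F) ≠ 0)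
    (hr : r ^ n = 1) : (n : F)⁻¹ * ∑ i ∈ range n, r ^ i = if r = 1 then 1 else 0 := by
  split_ifs with h
  · simp [h, hn]
  · rw [geom_sum_eq h, hr, sub_self, zero_div, mul_zero]

lemma IsPrimitiveRoot.neg_of_odd {q : F} {l : ℕ} (hq : IsPrimitiveRoot q l) (hodd : Odd l)
    (h2 : (2 : F) ≠ 0) : IsPrimitiveRoot (-q) (2 * l) := by
  have hneg : orderOf (-1 : F) = 2 :=
    orderOf_eq_prime (by norm_num) fun h => h2 (by linear_combination -h)
  convert IsPrimitiveRoot.orderOf (-q)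
  rw [neg_eq_neg_one_mul, (Commute.all _ _).orderOf_mul_eq_mul_orderOf_of_coprime, hneg,
    ← hq.eq_orderOf]
  rw [hneg, ← hq.eq_orderOf]
  exact Nat.coprime_two_left.2 hodd

lemma IsPrimitiveRoot.pow_sub_inv_ne_zero {q : F} {l : ℕ} (hq : q ≠ 0)
    (hq2 : IsPrimitiveRoot (q ^ 2) l) {k : ℕ} (h0 : k ≠ 0) (hk : k < l) :
    q ^ k - (q ^ k)⁻¹ ≠ 0 := by
  rw [Ne, sub_inv_eq_zero_iff (pow_ne_zero _ hq), ← pow_mul, mul_comm, pow_mul]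
  exact hq2.pow_ne_one_of_pos_of_lt h0 hk

end RootsOfUnity

section QBinom

variable {F : Type*} [Field F] {q u : F}

-- For `u = q ^ m` this is the balanced Gaussian binomial coefficient `[m choose i]`.
noncomputable def qBinom (q u : F) (i : ℕ) : F :=
  ∏ k ∈ range i, (u / q ^ k - (u / q ^ k)⁻¹) / (q ^ (k + 1) - (q ^ (k + 1))⁻¹)

lemma qBinom_zero : qBinom q u 0 = 1 := prod_range_zero _

lemma qBinom_succ (i : ℕ) : qBinom q u (i + 1) =
    qBinom q u i * ((u / q ^ i - (u / q ^ i)⁻¹) / (q ^ (i + 1) - (q ^ (i + 1))⁻¹)) :=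
  prod_range_succ _ _

lemma qBinom_succ' (i : ℕ) : qBinom q u (i + 1) =
    (u - u⁻¹) / (q ^ (i + 1) - (q ^ (i + 1))⁻¹) * qBinom q (u / q) i := by
  induction i with
  | zero => simp [qBinom_succ, qBinom_zero]
  | succ i ih =>
    rw [qBinom_succ, ih, qBinom_succ, div_div, ← pow_succ']
    ring

-- Both forms of Pascal's rule for `qBinom`, combined into the step of a telescoping sum.
lemma qBinom_succ_mul_sub (hq : q ≠ 0) (hu : u ≠ 0) {i : ℕ}
    (hd : q ^ (i + 1) - (q ^ (i + 1))⁻¹ ≠ 0) :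
    qBinom q u (i + 1) * (q ^ (i + 1) - u / q ^ (i + 1)) =
      (1 - u) * (qBinom q (u / q) (i + 1) - qBinom q (u / q) i) := by
  rw [qBinom_succ', qBinom_succ, div_div, ← pow_succ']
  set Q := q ^ (i + 1)
  have key : (u - u⁻¹) * (Q - u / Q) = (1 - u) * (u / Q - (u / Q)⁻¹ - (Q - Q⁻¹)) := by
    have : Q ≠ 0 := pow_ne_zero _ hq
    field_simp
    ring
  calc _ = qBinom q (u / q) i / (Q - Q⁻¹) * ((u - u⁻¹) * (Q - u / Q)) := by ring
    _ = (1 - u) * (qBinom q (u / q) i * ((u / Q - (u / Q)⁻¹) / (Q - Q⁻¹)) -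
          qBinom q (u / q) i * ((Q - Q⁻¹) / (Q - Q⁻¹))) := by
      rw [key]; ring
    _ = _ := by rw [div_self hd, mul_one]

lemma sum_qBinom_mul_sub (hq : q ≠ 0) (hu : u ≠ 0) {N : ℕ}
    (hd : ∀ k < N, q ^ (k + 1) - (q ^ (k + 1))⁻¹ ≠ 0) :
    ∑ i ∈ range (N + 1), qBinom q u i * (q ^ i - u / q ^ i) = (1 - u) * qBinom q (u / q) N := by
  induction N with
  | zero => simp [qBinom_zero]
  | succ N ih =>
    rw [sum_range_succ, ih fun k hk => hd k (by omega),
      qBinom_succ_mul_sub hq hu (hd N (by omega))]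
    ring

lemma qBinom_eq_zero {i k : ℕ} (hk : k < i) (h : (u / q ^ k) ^ 2 = 1) : qBinom q u i = 0 := by
  have hx : u / q ^ k ≠ 0 := by rintro hx; simp [hx] at h
  refine prod_eq_zero (mem_range.2 hk) ?_
  rw [(sub_inv_eq_zero_iff hx).2 h, zero_div]

lemma qBinom_neg_inv (hq : q ≠ 0) {i : ℕ}
    (hd : ∀ k < i, q ^ (k + 1) - (q ^ (k + 1))⁻¹ ≠ 0) :
    qBinom q (-q⁻¹) i = 1 := by
  refine prod_eq_one fun k hk => ?_
  have : -q⁻¹ / q ^ k = -(q ^ (k + 1))⁻¹ := by rw [pow_succ']; field_simp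
  rw [this, inv_neg, inv_inv, div_eq_one_iff_eq (hd k (mem_range.1 hk))]
  ring

lemma one_sub_mul_qBinom_div [DecidableEq F] {l : ℕ} (hl : 0 < l) (hq : q ≠ 0)
    (hq2 : IsPrimitiveRoot (q ^ 2) l) (hu : u ^ (2 * l) = 1) :
    (1 - u) * qBinom q (u / q) (l - 1) = if u = -1 then 2 else 0 := by
  split_ifs with hneg
  · subst hneg
    rw [neg_div, one_div,
      qBinom_neg_inv hq fun k hk => hq2.pow_sub_inv_ne_zero hq k.succ_ne_zero (by omega)]
    norm_num
  obtain rfl | hone := eq_or_ne u 1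
  · rw [sub_self, zero_mul]
  have := NeZero.of_pos hl
  have hu0 : u ≠ 0 := by
    rintro rfl
    rw [zero_pow (by omega)] at hu
    exact zero_ne_one hu
  obtain ⟨h, hhl, hh⟩ := hq2.eq_pow_of_pow_eq_one (ξ := u ^ 2) (by rw [← pow_mul, hu])
  have h0 : h ≠ 0 := by
    rintro rfl
    exact sq_ne_one_iff.2 ⟨hone, hneg⟩ (by rw [← hh, pow_zero])
  refine mul_eq_zero_of_right _ (qBinom_eq_zero (k := h - 1) (by omega) ?_)
  rw [div_div, ← pow_succ', Nat.sub_add_cancel (Nat.pos_of_ne_zero h0), div_pow, ← pow_mul,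
    mul_comm, pow_mul, hh, div_self (pow_ne_zero _ hu0)]

end QBinom

namespace QA

variable {F : Type*} [Field F] {l : ℕ}

noncomputable def eval (ζ : F) (hζ : ζ ^ (2 * l) = 1) : QA F l →ₐ[F] F :=
  Ideal.Quotient.liftₐ _ (aeval ζ) fun a ha => by
    obtain ⟨b, rfl⟩ := Ideal.mem_span_singleton'.1 ha
    simp [hζ]

lemma eval_mk (ζ : F) (hζ : ζ ^ (2 * l) = 1) (P : F[X]) :
    eval ζ hζ (Ideal.Quotient.mk _ P) = P.eval ζ :=
  aeval_def ζ P

lemma eval_KK (ζ : F) (hζ : ζ ^ (2 * l) = 1) : eval ζ hζ (KK F l) = ζ := by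
  rw [KK, eval_mk, eval_X]

lemma eval_KKinv (hl : 0 < l) (ζ : F) (hζ : ζ ^ (2 * l) = 1) :
    eval ζ hζ (KKinv F l) = ζ⁻¹ := by
  have hζ0 : ζ ≠ 0 := (IsUnit.of_pow_eq_one hζ (by omega)).ne_zero
  rw [KKinv, map_pow, eval_KK, ← mul_eq_one_iff_eq_inv₀ hζ0, ← pow_succ,
    Nat.sub_add_cancel (by omega), hζ]

lemma ext_eval (hl : 0 < l) {μ : F} (hμ : IsPrimitiveRoot μ (2 * l)) {x y : QA F l}
    (h : ∀ ζ (hζ : ζ ^ (2 * l) = 1), eval ζ hζ x = eval ζ hζ y) : x = y := by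
  obtain ⟨P, rfl⟩ := Ideal.Quotient.mk_surjective x
  obtain ⟨Q, rfl⟩ := Ideal.Quotient.mk_surjective y
  rw [Ideal.Quotient.eq, Ideal.mem_span_singleton, X_pow_sub_one_eq_prod (by omega) hμ]
  refine prod_dvd_of_coprime ((pairwise_coprime_X_sub_C Function.injective_id).set_pairwise _) ?_
  intro ζ hζ
  rw [dvd_iff_isRoot, IsRoot, eval_sub, sub_eq_zero, ← eval_mk, ← eval_mk]
  exact h ζ ((mem_nthRootsFinset (by omega) 1).1 hζ)

lemma eval_kappaBar (ζ : F) (hζ : ζ ^ (2 * l) = 1) (q : F) (n : ℤ) :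
    eval ζ hζ (kappaBar F l q n) =
      ((2 * l : ℕ) : F)⁻¹ * ∑ i ∈ range (2 * l), (-(q ^ (-2 * n) * ζ)) ^ i := by
  rw [kappaBar, map_smul, map_sum, smul_eq_mul]
  congr 1
  refine sum_congr rfl fun i _ => ?_
  rw [map_smul, map_pow, map_neg, eval_KK, smul_eq_mul, ← mul_neg, mul_pow,
    ← zpow_natCast (q ^ (-2 * n)), ← zpow_mul]

lemma eval_Kbinom (hl : 0 < l) (ζ : F) (hζ : ζ ^ (2 * l) = 1) {q : F} (hq : q ≠ 0) (c : ℤ)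
    (i : ℕ) : eval ζ hζ (Kbinom F l q c i) = qBinom q (q ^ c * ζ) i := by
  induction i with
  | zero => simp [Kbinom, qBinom_zero]
  | succ i ih =>
    rw [Kbinom, prod_Icc_succ_top (by omega), map_mul, ← Kbinom, ih, qBinom_succ]
    congr 1
    simp only [map_smul, map_sub, eval_KK, eval_KKinv hl, smul_eq_mul]
    rw [show c - ((i + 1 : ℕ) : ℤ) + 1 = c - i by push_cast; ring, zpow_neg, zpow_neg,
      zpow_sub₀ hq, zpow_natCast, zpow_natCast]
    ring

end QA

theorem stmt7_general (l : ℕ) (hodd : Odd l)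
    (F : Type*) [Field F] (hchar : ((2 * l : ℕ) : F) ≠ 0)
    (q : F) (hq : IsPrimitiveRoot q l) (n : ℤ) :
    kappaBar F l q n =
      (2 : F)⁻¹ • ∑ i ∈ Finset.range l,
        Kbinom F l q (-2 * n) i *
          (algebraMap F (QA F l) (q ^ (i : ℤ)) - q ^ (-(i : ℤ) - 2 * n) • KK F l) := by
  classical
  have hl : 0 < l := hodd.pos
  have h2 : (2 : F) ≠ 0 := by
    push_cast at hchar
    exact left_ne_zero_of_mul hchar
  have hq0 : q ≠ 0 := hq.ne_zero hl.ne'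
  have hq2 : IsPrimitiveRoot (q ^ 2) l := hq.pow_of_coprime 2 (Nat.coprime_two_left.2 hodd)
  refine QA.ext_eval hl (hq.neg_of_odd hodd h2) fun ζ hζ => ?_
  set u := q ^ (-2 * n) * ζ with hu_def
  have hu : u ^ (2 * l) = 1 := by
    rw [mul_pow, hζ, mul_one, ← zpow_natCast, ← zpow_mul, hq.zpow_eq_one_iff_dvd]
    exact ⟨-4 * n, by push_cast; ring⟩
  have hu0 : u ≠ 0 := (IsUnit.of_pow_eq_one hu (by omega)).ne_zero
  calc QA.eval ζ hζ (kappaBar F l q n) = if u = -1 then 1 else 0 := by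
        rw [QA.eval_kappaBar, inv_mul_geom_sum_of_pow_eq_one hchar
          (by rwa [(even_two_mul l).neg_pow]), neg_eq_iff_eq_neg]
    _ = 2⁻¹ * ((1 - u) * qBinom q (u / q) (l - 1)) := by
        rw [one_sub_mul_qBinom_div hl hq0 hq2 hu]
        split_ifs <;> simp [h2]
    _ = _ := by
        rw [← sum_qBinom_mul_sub hq0 hu0
          (fun k hk => hq2.pow_sub_inv_ne_zero hq0 k.succ_ne_zero (by omega)),
          Nat.sub_add_cancel hl]
        simp only [map_smul, map_sum, map_mul, map_sub, AlgHom.commutes,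
          QA.eval_Kbinom hl ζ hζ hq0, QA.eval_KK, smul_eq_mul, Algebra.algebraMap_self,
          RingHom.id_apply]
        refine congrArg _ (sum_congr rfl fun i _ => ?_)
        rw [zpow_natCast, show -(i : ℤ) - 2 * n = -2 * n + -(i : ℤ) by ring, zpow_add₀ hq0,
          zpow_neg, zpow_natCast, hu_def]
        ring

theorem stmt7 (l : ℕ) (hl : 1 < l) (hodd : Odd l)
    (F : Type*) [Field F] (hchar : ((2 * l : ℕ) : F) ≠ 0)
    (q : F) (hq : IsPrimitiveRoot q l) (n : ℤ) :
    kappaBar F l q n =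
      (2 : F)⁻¹ • ∑ i ∈ Finset.range l,
        Kbinom F l q (-2 * n) i *
          (algebraMap F (QA F l) (q ^ (i : ℤ)) - q ^ (-(i : ℤ) - 2 * n) • KK F l) :=
  stmt7_general l hodd F hchar q hq n
end

section
/- For every 0 ≤ n < p one has C(X, n) = Σ_{i=n}^{p−1} binom(i, n) · μ_i in R, where binom(i,n) denotes the ordinary binomial coefficient reduced modulo p. -/
/-!
Both sides are images of polynomials of degree `< p`, so it suffices to compare their values on
`𝔽_p`; the identity in fact already holds in `(ℤ/pℤ)[X]`. At `x ∈ 𝔽_p` the polynomial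
`C(X − a, i)` takes the value `binom((x − a).val, i)`, so the alternating binomial sum makes
`μ_i` the indicator function of `i`, and both sides evaluate to `binom(x.val, n)`.
-/

open Polynomial

/-- `C(X−a, i) = (i!)⁻¹ ∏_{j=0}^{i−1} (X − a − j) ∈ (ℤ/pℤ)[X]`. -/
noncomputable def Cpoly (p : ℕ) (a : ZMod p) (i : ℕ) : Polynomial (ZMod p) :=
  ((i.factorial : ZMod p))⁻¹ • ∏ j ∈ Finset.range i, (X - C (a + (j : ZMod p)))

/-- `R = (ℤ/pℤ)[X]/(X^p − X)`, a model of the distribution algebra `Dist(T₁)` for `SL₂`. -/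
abbrev Rp (p : ℕ) : Type _ :=
  Polynomial (ZMod p) ⧸ Ideal.span {(X : Polynomial (ZMod p)) ^ p - X}

/-- `μ_n ∈ R`, the image of `Σ_{i=0}^{p−1} (−1)^i C(X − n, i)`. -/
noncomputable def mu (p : ℕ) (n : ℕ) : Rp p :=
  Ideal.Quotient.mk (Ideal.span {(X : Polynomial (ZMod p)) ^ p - X})
    (∑ i ∈ Finset.range p, (-1 : ZMod p) ^ i • Cpoly p (n : ZMod p) i)

open Finset

theorem sum_range_neg_one_pow_mul_choose_of_lt {R : Type*} [Ring R] {m N : ℕ} (h : m < N) :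
    ∑ j ∈ range N, (-1 : R) ^ j * m.choose j = if m = 0 then 1 else 0 := by
  have key := congrArg (Int.cast : ℤ → R) (Int.alternating_sum_range_choose (n := m))
  push_cast [apply_ite (Int.cast : ℤ → R)] at key
  rw [← key]
  refine (sum_subset (range_subset_range.2 h) fun j _ hj => ?_).symm
  rw [Nat.choose_eq_zero_of_lt (by simpa using hj), Nat.cast_zero, mul_zero]

noncomputable def muPoly (p n : ℕ) : (ZMod p)[X] :=
  ∑ i ∈ range p, (-1 : ZMod p) ^ i • Cpoly p (n : ZMod p) i

section

variable {p : ℕ}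

theorem natDegree_Cpoly_le (a : ZMod p) (i : ℕ) : (Cpoly p a i).natDegree ≤ i := by
  refine (natDegree_smul_le _ _).trans ((natDegree_prod_le _ _).trans ?_)
  simpa using sum_le_sum fun (j : ℕ) (_ : j ∈ range i) =>
    natDegree_X_sub_C_le (a + (j : ZMod p))

theorem natDegree_muPoly_le (n : ℕ) : (muPoly p n).natDegree ≤ p - 1 :=
  natDegree_sum_le_of_forall_le _ _ fun j hj =>
    (natDegree_smul_le _ _).trans <| (natDegree_Cpoly_le _ _).trans <| by
      have := mem_range.1 hj; omega

theorem natCast_eq_iff_eq_val [NeZero p] {i : ℕ} (hi : i < p) (x : ZMod p) :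
    (i : ZMod p) = x ↔ i = x.val := by
  constructor
  · rintro rfl; rw [ZMod.val_cast_of_lt hi]
  · rintro rfl; exact ZMod.natCast_zmod_val x

variable [Fact p.Prime]

theorem eval_Cpoly (a x : ZMod p) (i : ℕ) :
    (Cpoly p a i).eval x = ((x - a).val.choose i : ZMod p) := by
  set m := (x - a).val
  have hprod :
      (∏ j ∈ range i, (X - C (a + (j : ZMod p)))).eval x = (m.descFactorial i : ZMod p) := by
    rw [← descPochhammer_eval_eq_descFactorial (ZMod p), descPochhammer_eval_eq_prod_range,
      eval_prod, ZMod.natCast_zmod_val]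
    exact prod_congr rfl fun j _ => by simp only [eval_sub, eval_X, eval_C]; ring
  rw [Cpoly, eval_smul, hprod, smul_eq_mul, Nat.descFactorial_eq_factorial_mul_choose,
    Nat.cast_mul]
  by_cases hi : (i.factorial : ZMod p) = 0
  · -- `p ∣ i!` forces `i ≥ p > m`
    have hmi : m < i := (ZMod.val_lt _).trans_le <|
      (Fact.out : p.Prime).dvd_factorial.1 ((ZMod.natCast_eq_zero_iff _ _).1 hi)
    simp [Nat.choose_eq_zero_of_lt hmi]
  · exact inv_mul_cancel_left₀ hi _

theorem eval_muPoly {i : ℕ} (hi : i < p) (x : ZMod p) :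
    (muPoly p i).eval x = if i = x.val then 1 else 0 := by
  simp only [muPoly, eval_finsetSum, eval_smul, eval_Cpoly, smul_eq_mul]
  rw [sum_range_neg_one_pow_mul_choose_of_lt (ZMod.val_lt _)]
  exact if_congr (by rw [ZMod.val_eq_zero, sub_eq_zero, eq_comm, natCast_eq_iff_eq_val hi]) rfl rfl

theorem Cpoly_zero_eq_sum_choose_smul_muPoly {n : ℕ} (hn : n < p) :
    Cpoly p 0 n = ∑ i ∈ Icc n (p - 1), (i.choose n : ZMod p) • muPoly p i := by
  have hp : 0 < p := (Fact.out : p.Prime).pos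
  refine eq_of_natDegree_lt_card_of_eval_eq' _ _ univ (fun x _ => ?_) ?_
  · have hterm : ∀ i ∈ Icc n (p - 1), ((i.choose n : ZMod p) • muPoly p i).eval x =
        if i = x.val then (i.choose n : ZMod p) else 0 := fun i hi => by
      rw [eval_smul, eval_muPoly (by have := (mem_Icc.1 hi).2; omega), smul_eq_mul, mul_ite,
        mul_one, mul_zero]
    rw [eval_Cpoly, sub_zero, eval_finsetSum, sum_congr rfl hterm, sum_ite_eq']
    by_cases hnx : n ≤ x.val
    · rw [if_pos (mem_Icc.2 ⟨hnx, by have := ZMod.val_lt x; omega⟩)]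
    · rw [if_neg fun h => hnx (mem_Icc.1 h).1, Nat.choose_eq_zero_of_lt (not_le.1 hnx),
        Nat.cast_zero]
  · rw [card_univ, ZMod.card]
    exact max_lt ((natDegree_Cpoly_le _ _).trans_lt hn) <|
      (natDegree_sum_le_of_forall_le _ _ fun i _ =>
        (natDegree_smul_le _ _).trans (natDegree_muPoly_le i)).trans_lt (by omega)

end

theorem stmt14_general (p : ℕ) (hp : p.Prime) (n : ℕ) (hn : n < p) :
    Ideal.Quotient.mk (Ideal.span {(X : Polynomial (ZMod p)) ^ p - X}) (Cpoly p 0 n) =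
      ∑ i ∈ Finset.Icc n (p - 1), ((i.choose n : ZMod p)) • mu p i := by
  have : Fact p.Prime := ⟨hp⟩
  rw [Cpoly_zero_eq_sum_choose_smul_muPoly hn, map_sum]
  exact sum_congr rfl fun i _ => map_smul (Ideal.Quotient.mkₐ (ZMod p) _) _ (muPoly p i)

theorem stmt14 (p : ℕ) (hp : p.Prime) (hodd : Odd p) (n : ℕ) (hn : n < p) :
    Ideal.Quotient.mk (Ideal.span {(X : Polynomial (ZMod p)) ^ p - X}) (Cpoly p 0 n) =
      ∑ i ∈ Finset.Icc n (p - 1), ((i.choose n : ZMod p)) • mu p i :=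
  stmt14_general p hp n hn
end

section
/- Let p be an odd prime, r ≥ 1 an integer, m ∈ ℤ and 0 ≤ n < p^r. Then for every integer x: binom(x − m, n) ≡ Σ_{i=0}^{p^r−1} binom(i − m, n) · binom(x − i − 1, p^r − 1) (mod p). (Via the separating characters χ_x of Dist(T_r), this expresses the change-of-basis formula binom(H−m, n) = Σ_{i=0}^{p^r−1} binom(i−m, n) · μ_i^{(r)} in Dist(T_r), where μ_i^{(r)} = binom(H−i−1, p^r−1).) -/
/-!
Modulo `p`, the polynomial function `y ↦ binom(y, k)` with `k < p^r` is periodic of period `p^r`: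
by Vandermonde, `binom(y + p^r, k) = ∑ binom(y, k - j) binom(p^r, j)`, and `p ∣ binom(p^r, j)` for
`0 < j < p^r`. On a period `0 ≤ t < p^r`, `binom(t, p^r - 1)` is `1` at `t = p^r - 1` and `0`
elsewhere, so `binom(x - i - 1, p^r - 1)` is, modulo `p`, the indicator of `x ≡ i (mod p^r)`. The sum
therefore collapses to the single term `i ≡ x`, which equals `binom(x - m, n)` by periodicity.
-/

/-- The generalized (falling-factorial) binomial coefficient
`binom(y, k) = y(y−1)⋯(y−k+1)/k! ∈ ℤ` for `y ∈ ℤ`, `k ∈ ℕ`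
(the division is exact, so integer division gives the correct value). -/
def ibinom (y : ℤ) (k : ℕ) : ℤ :=
  (∏ j ∈ Finset.range k, (y - (j : ℤ))) / (k.factorial : ℤ)

open Finset Function

lemma prod_range_sub_eq_descPochhammer_eval (y : ℤ) (k : ℕ) :
    ∏ j ∈ range k, (y - (j : ℤ)) = (descPochhammer ℤ k).eval y := by
  induction k with
  | zero => simp
  | succ k ih => rw [prod_range_succ, ih, descPochhammer_succ_eval]

lemma ibinom_eq_choose (y : ℤ) (k : ℕ) : ibinom y k = Ring.choose y k := by
  rw [ibinom, prod_range_sub_eq_descPochhammer_eval, Polynomial.eval_eq_smeval,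
    Ring.descPochhammer_eq_factorial_smul_choose, nsmul_eq_mul]
  exact Int.mul_ediv_cancel_left _ (by exact_mod_cast k.factorial_ne_zero)

lemma Int.periodic_choose_cast_zmod {p : ℕ} (hp : p.Prime) {r k : ℕ} (hk : k < p ^ r) :
    Periodic (fun y : ℤ => ((Ring.choose y k : ℤ) : ZMod p)) ((p ^ r : ℕ) : ℤ) := by
  intro y
  simp only [Ring.add_choose_eq k (Commute.all y _), Ring.choose_natCast, Int.cast_sum,
    Int.cast_mul, Int.cast_natCast]
  rw [sum_eq_single (k, 0) _ (by simp)]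
  · simp
  rintro ⟨i, j⟩ hij hne
  rw [Finset.HasAntidiagonal.mem_antidiagonal] at hij
  have hj : j ≠ 0 := by rintro rfl; exact hne (by simp_all)
  rw [(ZMod.natCast_eq_zero_iff _ p).mpr (hp.dvd_choose_pow hj (by omega)), mul_zero]

lemma Function.Periodic.map_emod {α : Type*} {f : ℤ → α} {c : ℤ} (hf : Periodic f c) (x : ℤ) :
    f (x % c) = f x := by
  rw [Int.emod_def, mul_comm, ← smul_eq_mul, zsmul_eq_mul, hf.sub_int_mul_eq]

lemma Int.natCast_dvd_sub_natCast_iff {N i : ℕ} (hi : i < N) (x : ℤ) :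
    (N : ℤ) ∣ x - i ↔ i = (x % N).toNat := by
  rw [← Int.modEq_iff_dvd, Int.ModEq, Int.emod_eq_of_lt (by positivity) (by omega)]
  have := Int.emod_nonneg x (by omega : (N : ℤ) ≠ 0)
  omega

lemma Nat.choose_pred_eq_ite {N t : ℕ} (ht : t < N) :
    t.choose (N - 1) = if t = N - 1 then 1 else 0 := by
  split_ifs with h
  · rw [h, Nat.choose_self]
  · exact Nat.choose_eq_zero_of_lt (by omega)

lemma Int.choose_prime_pow_sub_one_cast_zmod {p : ℕ} (hp : p.Prime) (r : ℕ) (y : ℤ) :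
    ((Ring.choose y (p ^ r - 1) : ℤ) : ZMod p) = if ((p ^ r : ℕ) : ℤ) ∣ y + 1 then 1 else 0 := by
  have hN : 0 < p ^ r := pow_pos hp.pos r
  have hy : y % (p ^ r : ℕ) < (p ^ r : ℕ) := Int.emod_lt_of_pos y (by positivity)
  have hdvd : ((p ^ r : ℕ) : ℤ) ∣ y + 1 ↔ (y % (p ^ r : ℕ)).toNat = p ^ r - 1 := by
    have : y + 1 = y - ((p ^ r - 1 : ℕ) : ℤ) + (p ^ r : ℕ) := by push_cast [Nat.cast_sub hN]; ring
    rw [this, dvd_add_self_right, Int.natCast_dvd_sub_natCast_iff (by omega), eq_comm]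
  rw [← (Int.periodic_choose_cast_zmod hp (Nat.sub_lt hN one_pos)).map_emod,
    ← Int.toNat_of_nonneg (Int.emod_nonneg y (by positivity)), Ring.choose_natCast,
    Nat.choose_pred_eq_ite (by omega)]
  simp only [hdvd]
  split_ifs <;> simp

lemma Function.Periodic.sum_range_ite_dvd_sub {M : Type*} [AddCommMonoid M] {f : ℤ → M} {N : ℕ}
    (hf : Periodic f N) (hN : 0 < N) (x : ℤ) :
    ∑ i ∈ range N, (if (N : ℤ) ∣ x - i then f i else 0) = f x := by
  have hx : 0 ≤ x % N := Int.emod_nonneg x (by omega)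
  have hxN : x % N < N := Int.emod_lt_of_pos x (by omega)
  rw [sum_congr rfl fun i hi => if_congr (Int.natCast_dvd_sub_natCast_iff (mem_range.1 hi) x)
    rfl rfl, sum_ite_eq', if_pos (mem_range.2 (by omega)), Int.toNat_of_nonneg hx, hf.map_emod]

theorem stmt16_general (p : ℕ) (hp : p.Prime) (r : ℕ)
    (m : ℤ) (n : ℕ) (hn : n < p ^ r) (x : ℤ) :
    ((ibinom (x - m) n : ZMod p)) =
      ∑ i ∈ Finset.range (p ^ r),
        ((ibinom ((i : ℤ) - m) n : ZMod p)) * ((ibinom (x - i - 1) (p ^ r - 1) : ZMod p)) := by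
  simp only [ibinom_eq_choose, Int.choose_prime_pow_sub_one_cast_zmod hp, sub_add_cancel, mul_ite,
    mul_one, mul_zero]
  exact (((Int.periodic_choose_cast_zmod hp hn).sub_const m).sum_range_ite_dvd_sub
    (pow_pos hp.pos r) x).symm

theorem stmt16 (p : ℕ) (hp : p.Prime) (hodd : Odd p) (r : ℕ) (hr : 1 ≤ r)
    (m : ℤ) (n : ℕ) (hn : n < p ^ r) (x : ℤ) :
    ((ibinom (x - m) n : ZMod p)) =
      ∑ i ∈ Finset.range (p ^ r),
        ((ibinom ((i : ℤ) - m) n : ZMod p)) * ((ibinom (x - i - 1) (p ^ r - 1) : ZMod p)) :=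
  stmt16_general p hp r m n hn x
end
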